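/- Define f̄_T(x) = -Ψ(1)Φ(x₁) + Σ_{i=2}^{T} [Ψ(-x_{i-1})Φ(-x_i) - Ψ(x_{i-1})Φ(x_i)] on ℝ^T. If x ∈ ℝ^T satisfies |x_i| < 1 for some i ≤ T, then there exists j ≤ i with |x_j| < 1 and |∂f̄_T/∂x_j (x)| > 1; in particular ‖∇f̄_T(x)‖ > 1. -/

import Mathlib

open scoped BigOperators

/-- Ψ(x) = 0 for x ≤ 1/2 and exp(1 - 1/(2x-1)²) for x > 1/2. -/
noncomputable def Psi (x : ℝ) : ℝ :=
  if x ≤ 1/2 then 0 else Real.exp (1 - 1 / (2*x - 1)^2)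

/-- Φ(y) = √e · ∫_{-∞}^y e^{-t²/2} dt. -/
noncomputable def Phi (y : ℝ) : ℝ :=
  Real.sqrt (Real.exp 1) * ∫ t in Set.Iic y, Real.exp (-t^2/2)

/-- The Nesterov-style hard instance f̄_T (0-indexed coordinates). -/
noncomputable def fbar (T : ℕ) (x : Fin T → ℝ) : ℝ :=
  ∑ i : Fin T,
    if (i : ℕ) = 0 then -(Psi 1 * Phi (x i))
    else Psi (-(x ⟨i.1 - 1, lt_of_le_of_lt (Nat.sub_le _ _) i.isLt⟩)) * Phi (-(x i))
         - Psi (x ⟨i.1 - 1, lt_of_le_of_lt (Nat.sub_le _ _) i.isLt⟩) * Phi (x i)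

/-- j-th partial derivative of f̄_T at x. -/
noncomputable def fpartial (T : ℕ) (x : Fin T → ℝ) (j : Fin T) : ℝ :=
  deriv (fun s => fbar T (Function.update x j s)) (x j)

/-!
Ψ and Φ are nondecreasing and nonnegative, so every summand of f̄_T is antitone in x and
contributes a nonpositive amount to each partial derivative. Take j minimal with |x_j| < 1.
The j-th summand alone contributes -(Ψ(-x_{j-1}) + Ψ(x_{j-1})) Φ'(x_j) (or -Ψ(1) Φ'(x_j) for the
first index); as |x_{j-1}| ≥ 1, one of the two Ψ values is at least 1, and
Φ'(x_j) = exp((1 - x_j²)/2) > 1 as |x_j| < 1. Hence ∂f̄_T/∂x_j (x) < -1.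
-/

open Real Set Function MeasureTheory

lemma hasDerivAt_mul_abs (t : ℝ) : HasDerivAt (fun s : ℝ => s * |s|) (2 * |t|) t := by
  have hne : ∀ s ≠ (0 : ℝ), HasDerivAt (fun s : ℝ => s * |s|) (2 * |s|) s := fun s hs =>
    ((hasDerivAt_id' s).mul (hasDerivAt_abs hs)).congr_deriv (by rw [self_mul_sign]; ring)
  rcases eq_or_ne t 0 with rfl | ht
  · exact hasDerivAt_of_hasDerivAt_of_ne (g := fun s => 2 * |s|) hne (by fun_prop) (by fun_prop)
  · exact hne t ht

lemma monotone_mul_abs : Monotone fun s : ℝ => s * |s| :=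
  monotone_of_hasDerivAt_nonneg hasDerivAt_mul_abs fun t => mul_nonneg zero_le_two (abs_nonneg t)

-- This reduces the smoothness of Ψ at 1/2 to that of `s ↦ s * |s|` at 0.
lemma Psi_eq_exp_one_mul_expNegInvGlue (x : ℝ) :
    Psi x = exp 1 * expNegInvGlue ((2 * x - 1) * |2 * x - 1|) := by
  rcases le_or_gt x (1 / 2) with hx | hx
  · rw [Psi, if_pos hx, expNegInvGlue.zero_of_nonpos, mul_zero]
    exact mul_nonpos_of_nonpos_of_nonneg (by linarith) (abs_nonneg _)
  · have hpos : 0 < 2 * x - 1 := by linarith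
    rw [Psi, if_neg hx.not_ge, abs_of_pos hpos, expNegInvGlue, if_neg (mul_pos hpos hpos).not_ge,
      ← exp_add]
    ring_nf

lemma Psi_nonneg (x : ℝ) : 0 ≤ Psi x := by
  rw [Psi_eq_exp_one_mul_expNegInvGlue]
  exact mul_nonneg (exp_pos 1).le (expNegInvGlue.nonneg _)

lemma monotone_Psi : Monotone Psi := by
  intro a b hab
  simp only [Psi_eq_exp_one_mul_expNegInvGlue]
  exact mul_le_mul_of_nonneg_left
    (expNegInvGlue.monotone (monotone_mul_abs (by linarith : 2 * a - 1 ≤ 2 * b - 1)))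
    (exp_pos 1).le

@[fun_prop]
lemma differentiable_Psi : Differentiable ℝ Psi := by
  have hglue : Differentiable ℝ expNegInvGlue :=
    (expNegInvGlue.contDiff (n := 1)).differentiable one_ne_zero
  have hmul_abs : Differentiable ℝ fun s : ℝ => s * |s| :=
    fun t => (hasDerivAt_mul_abs t).differentiableAt
  rw [funext Psi_eq_exp_one_mul_expNegInvGlue]
  exact (hglue.comp (hmul_abs.comp (by fun_prop))).const_mul _

lemma one_le_Psi {x : ℝ} (hx : 1 ≤ x) : 1 ≤ Psi x := by
  have hu : 1 ≤ (2 * x - 1) ^ 2 := by nlinarith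
  rw [Psi, if_neg (by linarith), one_le_exp_iff, sub_nonneg]
  exact div_le_one_of_le₀ hu (by positivity)

lemma one_le_Psi_neg_add_Psi {a : ℝ} (ha : 1 ≤ |a|) : 1 ≤ Psi (-a) + Psi a := by
  rcases le_abs'.1 ha with h | h
  · linarith [one_le_Psi (le_neg_of_le_neg h), Psi_nonneg a]
  · linarith [one_le_Psi h, Psi_nonneg (-a)]

lemma hasDerivAt_integral_Iic {E : Type*} [NormedAddCommGroup E] [NormedSpace ℝ E]
    [CompleteSpace E] {f : ℝ → E} (hf : Integrable f) (hc : Continuous f) (y : ℝ) :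
    HasDerivAt (fun z => ∫ t in Iic z, f t) (f y) y := by
  have hsplit : (fun z => ∫ t in Iic z, f t) =
      fun z => (∫ t in Iic 0, f t) + ∫ t in (0 : ℝ)..z, f t := by
    funext z
    rw [← intervalIntegral.integral_Iic_sub_Iic hf.integrableOn hf.integrableOn, add_sub_cancel]
  rw [hsplit]
  exact (intervalIntegral.integral_hasDerivAt_right hf.intervalIntegrable
    (hc.stronglyMeasurableAtFilter _ _) hc.continuousAt).const_add _

noncomputable def phi (y : ℝ) : ℝ := √(exp 1) * exp (-y ^ 2 / 2)

lemma phi_neg (y : ℝ) : phi (-y) = phi y := by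
  simp [phi]

lemma one_lt_phi {y : ℝ} (hy : |y| < 1) : 1 < phi y := by
  have hy2 : y ^ 2 < 1 := by nlinarith [sq_abs y, abs_nonneg y]
  rw [phi, ← exp_half, ← exp_add, one_lt_exp_iff]
  linarith

lemma hasDerivAt_Phi (y : ℝ) : HasDerivAt Phi (phi y) y := by
  have hint : Integrable fun t : ℝ => exp (-t ^ 2 / 2) := by
    simpa [div_eq_inv_mul] using integrable_exp_neg_mul_sq (by norm_num : (0 : ℝ) < 1 / 2)
  exact (hasDerivAt_integral_Iic hint (by fun_prop) y).const_mul _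

@[fun_prop]
lemma differentiable_Phi : Differentiable ℝ Phi :=
  fun y => (hasDerivAt_Phi y).differentiableAt

lemma Phi_nonneg (y : ℝ) : 0 ≤ Phi y :=
  mul_nonneg (sqrt_nonneg _) (setIntegral_nonneg measurableSet_Iic fun _ _ => (exp_pos _).le)

lemma monotone_Phi : Monotone Phi :=
  monotone_of_hasDerivAt_nonneg hasDerivAt_Phi fun _ => mul_nonneg (sqrt_nonneg _) (exp_pos _).le

section fbar

variable {T : ℕ}

-- Truncated subtraction makes `prevIdx 0 = 0`; the first summand never reads it.
def prevIdx (i : Fin T) : Fin T := ⟨i.1 - 1, lt_of_le_of_lt (Nat.sub_le _ _) i.isLt⟩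

lemma prevIdx_lt {i : Fin T} (hi : (i : ℕ) ≠ 0) : prevIdx i < i :=
  Fin.lt_def.2 (Nat.sub_lt (Nat.pos_of_ne_zero hi) one_pos)

noncomputable def fbarTerm (i : Fin T) (x : Fin T → ℝ) : ℝ :=
  if (i : ℕ) = 0 then -(Psi 1 * Phi (x i))
  else Psi (-(x (prevIdx i))) * Phi (-(x i)) - Psi (x (prevIdx i)) * Phi (x i)

noncomputable def diagWeight (x : Fin T → ℝ) (j : Fin T) : ℝ :=
  if (j : ℕ) = 0 then Psi 1 else Psi (-(x (prevIdx j))) + Psi (x (prevIdx j))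

lemma one_le_diagWeight {x : Fin T → ℝ} {j : Fin T}
    (hprev : (j : ℕ) ≠ 0 → 1 ≤ |x (prevIdx j)|) : 1 ≤ diagWeight x j := by
  unfold diagWeight
  split_ifs with h0
  · exact one_le_Psi le_rfl
  · exact one_le_Psi_neg_add_Psi (hprev h0)

lemma fbar_eq_sum_fbarTerm (x : Fin T → ℝ) : fbar T x = ∑ i, fbarTerm i x := rfl

lemma antitone_fbarTerm (i : Fin T) : Antitone (fbarTerm i) := by
  intro x y hxy
  have hΨ := monotone_Psi (neg_le_neg (hxy (prevIdx i)))
  have hΨ' := monotone_Psi (hxy (prevIdx i))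
  have hΦ := monotone_Phi (neg_le_neg (hxy i))
  have hΦ' := monotone_Phi (hxy i)
  unfold fbarTerm
  split_ifs
  · exact neg_le_neg (mul_le_mul_of_nonneg_left hΦ' (Psi_nonneg 1))
  · exact sub_le_sub (mul_le_mul hΨ hΦ (Phi_nonneg _) (Psi_nonneg _))
      (mul_le_mul hΨ' hΦ' (Phi_nonneg _) (Psi_nonneg _))

lemma differentiable_fbarTerm (i : Fin T) : Differentiable ℝ (fbarTerm i) := by
  unfold fbarTerm
  split_ifs <;> fun_prop

lemma fpartial_eq_sum (x : Fin T → ℝ) (j : Fin T) :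
    fpartial T x j = ∑ i, deriv (fun s => fbarTerm i (update x j s)) (x j) := by
  simp only [fpartial, fbar_eq_sum_fbarTerm]
  exact deriv_fun_sum fun i _ =>
    (differentiable_fbarTerm i _).comp (x j) (hasDerivAt_update x j (x j)).differentiableAt

lemma fpartial_le_deriv_fbarTerm_self (x : Fin T → ℝ) (j : Fin T) :
    fpartial T x j ≤ deriv (fun s => fbarTerm j (update x j s)) (x j) := by
  rw [fpartial_eq_sum, ← Finset.add_sum_erase _ _ (Finset.mem_univ j)]
  exact add_le_of_nonpos_right (Finset.sum_nonpos fun i _ =>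
    ((antitone_fbarTerm i).comp_monotone update_mono).deriv_nonpos)

lemma hasDerivAt_fbarTerm_update_self (x : Fin T → ℝ) (j : Fin T) :
    HasDerivAt (fun s => fbarTerm j (update x j s)) (-(diagWeight x j * phi (x j))) (x j) := by
  unfold fbarTerm diagWeight
  split_ifs with hj
  · simpa only [update_self] using ((hasDerivAt_Phi (x j)).const_mul (Psi 1)).fun_neg
  · have hprev : prevIdx j ≠ j := (prevIdx_lt hj).ne
    simp only [update_self, update_of_ne hprev]
    have hneg := (hasDerivAt_Phi (-(x j))).comp (x j) (hasDerivAt_neg (x j))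
    exact ((hneg.const_mul (Psi (-(x (prevIdx j))))).fun_sub
      ((hasDerivAt_Phi (x j)).const_mul (Psi (x (prevIdx j))))).congr_deriv
        (by rw [phi_neg]; ring)

lemma fpartial_lt_neg_one {x : Fin T → ℝ} {j : Fin T} (hj : |x j| < 1)
    (hprev : (j : ℕ) ≠ 0 → 1 ≤ |x (prevIdx j)|) : fpartial T x j < -1 := by
  calc fpartial T x j ≤ _ := fpartial_le_deriv_fbarTerm_self x j
    _ = _ := (hasDerivAt_fbarTerm_update_self x j).deriv
    _ < -1 := neg_lt_neg (one_lt_mul_of_le_of_lt (one_le_diagWeight hprev) (one_lt_phi hj))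

end fbar

theorem stmt_5_general (T : ℕ) (x : Fin T → ℝ) (i : Fin T) (hi : |x i| < 1) :
    (∃ j : Fin T, j ≤ i ∧ |x j| < 1 ∧ 1 < |fpartial T x j|) ∧
      1 < Real.sqrt (∑ j : Fin T, (fpartial T x j)^2) := by
  obtain ⟨j, hj, hmin⟩ := wellFounded_lt.has_min {k | |x k| < 1} ⟨i, hi⟩
  have hpartial : fpartial T x j < -1 :=
    fpartial_lt_neg_one hj fun h0 => not_lt.1 fun h => hmin _ h (prevIdx_lt h0)
  have habs : 1 < |fpartial T x j| := lt_abs.2 (Or.inr (by linarith))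
  refine ⟨⟨j, not_lt.1 (hmin i hi), hj, habs⟩, habs.trans_le (abs_le_sqrt ?_)⟩
  exact Finset.single_le_sum (fun k _ => sq_nonneg (fpartial T x k)) (Finset.mem_univ j)

/-- If some coordinate of x (among the first i) has |x_i| < 1, then some partial
derivative at an index j ≤ i with |x_j| < 1 exceeds 1 in absolute value; in
particular the gradient norm exceeds 1. -/
theorem stmt_5 (T : ℕ) (hT : 1 ≤ T) (x : Fin T → ℝ) (i : Fin T) (hi : |x i| < 1) :
    (∃ j : Fin T, j ≤ i ∧ |x j| < 1 ∧ 1 < |fpartial T x j|) ∧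
      1 < Real.sqrt (∑ j : Fin T, (fpartial T x j)^2) :=
  stmt_5_general T x i hi
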